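/- In the composition L ⊗ EM of an LTS L with the enforcement monitor EM of a safety property Π, every reachable trace σ satisfies controlled(σ) ∈ Π; moreover controlled(σ) is a trace of L. (Correctness of enforcement.) -/

import Mathlib

open scoped Classical

/-- Four-valued truth domain B4. -/
inductive B4 : Type
  | top | topc | botc | bot
deriving DecidableEq

/-- Four-valued evaluation of a finite sequence against a property. -/
noncomputable def eval {α : Type} (P : Set (List α)) (σ : List α) : B4 :=
  if σ ∈ P then (if ∀ τ : List α, σ ++ τ ∈ P then B4.top else B4.topc)
  else (if ∃ τ : List α, σ ++ τ ∈ P then B4.botc else B4.bot)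

/-- Safety property: contains ε and is prefix-closed. -/
def Safety {α : Type} (P : Set (List α)) : Prop :=
  [] ∈ P ∧ ∀ σ ∈ P, ∀ τ : List α, τ <+: σ → τ ∈ P

/-- Events together with their cancellation events. -/
inductive Ev (α : Type) : Type
  | act : α → Ev α
  | cancel : α → Ev α
deriving DecidableEq

/-- The partial function `controlled`, erasing matched pairs e·ē. -/
def controlled {α : Type} [DecidableEq α] : List (Ev α) → Option (List α)
  | [] => some []
  | [Ev.act e] => some [e]
  | Ev.act e :: Ev.cancel e' :: rest =>
      if e = e' then controlled rest else none
  | Ev.act e :: Ev.act e' :: rest =>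
      (controlled (Ev.act e' :: rest)).map (e :: ·)
  | Ev.cancel _ :: _ => none

/-- Run of a deterministic oracle. -/
def run {Q α : Type} (step : Q → α → Q) : Q → List α → Q
  | q, [] => q
  | q, e :: σ => run step (step q e) σ

/-- Composition L ⊗ EM of an LTS with the enforcement monitor of a safety
property: rule (1) non-monitored events, rule (2) good synchronized steps,
rule (3) atomic corrected steps e·ē. -/
inductive Mon {Loc Q α β : Type} (Trans : Loc → α ⊕ β → Loc → Prop)
    (step : Q → α → Q) (verdict : Q → B4) :
    Loc × Q → List (Ev α ⊕ β) → Loc × Q → Prop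
  | ext {q q' : Loc} {θ : Q} {b : β} :
      Trans q (Sum.inr b) q' →
      Mon Trans step verdict (q, θ) [Sum.inr b] (q', θ)
  | good {q q' : Loc} {θ : Q} {e : α} :
      Trans q (Sum.inl e) q' →
      (verdict (step θ e) = B4.top ∨ verdict (step θ e) = B4.topc) →
      Mon Trans step verdict (q, θ) [Sum.inl (Ev.act e)] (q', step θ e)
  | correct {q q' : Loc} {θ : Q} {e : α} :
      Trans q (Sum.inl e) q' →
      verdict (step θ e) = B4.bot →
      Mon Trans step verdict (q, θ)
        [Sum.inl (Ev.act e), Sum.inl (Ev.cancel e)] (q, θ)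

/-- Traces of the composition. -/
inductive TraceM {Loc Q α β : Type} (Trans : Loc → α ⊕ β → Loc → Prop)
    (step : Q → α → Q) (verdict : Q → B4) (l0 : Loc) (θ0 : Q) :
    List (Ev α ⊕ β) → Loc × Q → Prop
  | nil : TraceM Trans step verdict l0 θ0 [] (l0, θ0)
  | snoc {w : List (Ev α ⊕ β)} {s : Loc × Q} {ls : List (Ev α ⊕ β)}
      {s' : Loc × Q} :
      TraceM Trans step verdict l0 θ0 w s →
      Mon Trans step verdict s ls s' →
      TraceM Trans step verdict l0 θ0 (w ++ ls) s'

/-- Traces of the plain LTS. -/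
inductive TraceL {Loc γ : Type} (Trans : Loc → γ → Loc → Prop) (l0 : Loc) :
    List γ → Loc → Prop
  | nil : TraceL Trans l0 [] l0
  | snoc {w : List γ} {l l' : Loc} {g : γ} :
      TraceL Trans l0 w l → Trans l g l' → TraceL Trans l0 (w ++ [g]) l'

/-- Projection of a composed trace on the monitored events Σ ∪ Σ̄. -/
def projEv {α β : Type} (w : List (Ev α ⊕ β)) : List (Ev α) :=
  w.filterMap (Sum.elim some fun _ => none)

/-- Projection of an LTS trace on the monitored events Σ. -/
def projA {α β : Type} (w : List (α ⊕ β)) : List α :=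
  w.filterMap (Sum.elim some fun _ => none)

/-!
Along a run of `L ⊗ EM` one keeps track of the controlled word `τ`, of a run of `L` whose
Σ-projection is `τ`, and of the fact that the monitor sits in the oracle state reached by `τ`.
A synchronous step `e` is only taken when the oracle's verdict on `τ e` is `⊤` or `⊤c`, which
forces `τ e ∈ Π`; a corrected step `e ē` leaves the location, the monitor state and `τ` unchanged,
since `controlled` erases the pair.
-/

theorem run_append_singleton {Q α : Type} (step : Q → α → Q) (q : Q) (σ : List α) (e : α) :
    run step q (σ ++ [e]) = step (run step q σ) e := by
  induction σ generalizing q with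
  | nil => rfl
  | cons a σ ih => exact ih (step q a)

/-- A stray `ē` at the head of `v` could cancel the last event of `w`; `hv` excludes it. -/
theorem controlled_append {α : Type} [DecidableEq α] {w v : List (Ev α)} {τ τ' : List α}
    (hw : controlled w = some τ) (hv : controlled v = some τ') :
    controlled (w ++ v) = some (τ ++ τ') := by
  induction w using controlled.induct generalizing τ with
  | case1 =>
    cases hw
    exact hv
  | case2 a =>
    cases hw
    match v, hv with
    | [], hv => cases hv; rfl
    | Ev.act b :: rest, hv => simp [controlled, hv]
  | case3 a rest ih =>
    rw [controlled, if_pos rfl] at hw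
    simpa [controlled] using ih hw
  | case4 a a' rest hne => simp [controlled, hne] at hw
  | case5 a a' rest ih =>
    obtain ⟨τ₀, hτ₀, rfl⟩ := Option.map_eq_some_iff.mp hw
    have hrest := ih hτ₀
    rw [List.cons_append] at hrest
    simp [controlled, hrest]
  | case6 a rest => simp [controlled] at hw

theorem mem_of_eval_eq_top_or_eq_topc {α : Type} {P : Set (List α)} {σ : List α}
    (h : eval P σ = B4.top ∨ eval P σ = B4.topc) : σ ∈ P := by
  unfold eval at h
  split_ifs at h <;> simp_all

theorem TraceM.exists_controlled {α β Loc Q : Type} [DecidableEq α] {P : Set (List α)}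
    (hnil : [] ∈ P) {Trans : Loc → α ⊕ β → Loc → Prop} {step : Q → α → Q} {θ0 : Q}
    {verdict : Q → B4} (hOracle : ∀ σ : List α, verdict (run step θ0 σ) = eval P σ)
    {l0 : Loc} {w : List (Ev α ⊕ β)} {s : Loc × Q}
    (hw : TraceM Trans step verdict l0 θ0 w s) :
    ∃ τ : List α, controlled (projEv w) = some τ ∧ τ ∈ P ∧ s.2 = run step θ0 τ ∧
      ∃ u : List (α ⊕ β), TraceL Trans l0 u s.1 ∧ projA u = τ := by
  induction hw with
  | nil => exact ⟨[], rfl, hnil, rfl, [], .nil, rfl⟩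
  | snoc _ hm ih =>
    obtain ⟨τ, hτ, hτP, hθ, u, hu, hproj⟩ := ih
    cases hm with
    | ext hT =>
      refine ⟨τ, ?_, hτP, hθ, u ++ [.inr _], hu.snoc hT, ?_⟩
      · simpa [projEv, List.filterMap_cons] using hτ
      · simpa [projA, List.filterMap_cons] using hproj
    | @good _ _ θ e hT hv =>
      have hrun : step θ e = run step θ0 (τ ++ [e]) := by rw [run_append_singleton, ← hθ]
      refine ⟨τ ++ [e], ?_, ?_, hrun, u ++ [.inl e], hu.snoc hT, ?_⟩
      · simpa [projEv] using controlled_append hτ (rfl : controlled [Ev.act e] = some [e])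
      · exact mem_of_eval_eq_top_or_eq_topc (hOracle (τ ++ [e]) ▸ hrun ▸ hv)
      · simpa [projA] using hproj
    | @correct _ _ _ e =>
      refine ⟨τ, ?_, hτP, hθ, u, hu, hproj⟩
      have hpair : controlled [Ev.act e, Ev.cancel e] = some [] := by simp [controlled]
      simpa [projEv] using controlled_append hτ hpair

theorem enforcement_correct {α β Loc Q : Type} [DecidableEq α]
    (P : Set (List α)) (hP : Safety P)
    (Trans : Loc → α ⊕ β → Loc → Prop)
    (step : Q → α → Q) (θ0 : Q) (verdict : Q → B4)
    (hOracle : ∀ σ : List α, verdict (run step θ0 σ) = eval P σ)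
    (l0 : Loc) (w : List (Ev α ⊕ β)) (s : Loc × Q)
    (hw : TraceM Trans step verdict l0 θ0 w s) :
    ∃ τ : List α, controlled (projEv w) = some τ ∧ τ ∈ P ∧
      ∃ (u : List (α ⊕ β)) (l : Loc), TraceL Trans l0 u l ∧ projA u = τ := by
  obtain ⟨τ, hτ, hτP, -, u, hu, hproj⟩ := hw.exists_controlled hP.1 hOracle
  exact ⟨τ, hτ, hτP, u, s.1, hu, hproj⟩
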